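/- The proof search strategy 𝔰_P is validity-preserving: any play of 𝔰_P from an 𝓛-valid sequent (one with ⋂_{e∈Γ} L(e) ⊆ ⋃_{f∈Δ} L(f)) visits only 𝓛-valid sequents. -/
import Mathlib


namespace RLL

/-- Right-linear lattice (RLL) expressions over alphabet `𝒜`, with de Bruijn variables. -/
inductive Expr (𝒜 : Type) : Type
  | var : ℕ → Expr 𝒜
  | letter : 𝒜 → Expr 𝒜 → Expr 𝒜
  | zero : Expr 𝒜
  | plus : Expr 𝒜 → Expr 𝒜 → Expr 𝒜
  | top : Expr 𝒜
  | inter : Expr 𝒜 → Expr 𝒜 → Expr 𝒜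
  | mu : Expr 𝒜 → Expr 𝒜
  | nu : Expr 𝒜 → Expr 𝒜
  deriving DecidableEq

namespace Expr

variable {𝒜 : Type}

/-- Renaming of de Bruijn variables. -/
def rename (f : ℕ → ℕ) : Expr 𝒜 → Expr 𝒜
  | var n => var (f n)
  | letter a e => letter a (rename f e)
  | zero => zero
  | plus e g => plus (rename f e) (rename f g)
  | top => top
  | inter e g => inter (rename f e) (rename f g)
  | mu e => mu (rename (fun n => match n with | 0 => 0 | m + 1 => f m + 1) e)
  | nu e => nu (rename (fun n => match n with | 0 => 0 | m + 1 => f m + 1) e)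

/-- Simultaneous substitution. -/
def subst (σ : ℕ → Expr 𝒜) : Expr 𝒜 → Expr 𝒜
  | var n => σ n
  | letter a e => letter a (subst σ e)
  | zero => zero
  | plus e g => plus (subst σ e) (subst σ g)
  | top => top
  | inter e g => inter (subst σ e) (subst σ g)
  | mu e => mu (subst (fun n => match n with | 0 => var 0 | m + 1 => rename Nat.succ (σ m)) e)
  | nu e => nu (subst (fun n => match n with | 0 => var 0 | m + 1 => rename Nat.succ (σ m)) e)

/-- Substitute `f` for the variable with de Bruijn index `0` (used for unfolding
fixed points: `σX e(X) ↦ e(σX e(X))`). -/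
def subst0 (f : Expr 𝒜) (e : Expr 𝒜) : Expr 𝒜 :=
  subst (fun n => match n with | 0 => f | m + 1 => var m) e

/-- All free variables of `e` are `< n`. -/
def ClosedUnder : Expr 𝒜 → ℕ → Prop
  | var m, n => m < n
  | letter _ e, n => ClosedUnder e n
  | zero, _ => True
  | plus e f, n => ClosedUnder e n ∧ ClosedUnder f n
  | top, _ => True
  | inter e f, n => ClosedUnder e n ∧ ClosedUnder f n
  | mu e, n => ClosedUnder e (n + 1)
  | nu e, n => ClosedUnder e (n + 1)

/-- `e` has no free variables. -/
def Closed (e : Expr 𝒜) : Prop := ClosedUnder e 0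

/-- `GuardedIn e U` : no variable of `U` occurs in `e` outside the scope of a letter `a·`,
and every variable bound in `e` is separated from its binder by a letter.  -/
def GuardedIn : Expr 𝒜 → Set ℕ → Prop
  | var n, U => n ∉ U
  | letter _ e, _ => GuardedIn e ∅
  | zero, _ => True
  | plus e f, U => GuardedIn e U ∧ GuardedIn f U
  | top, _ => True
  | inter e f, U => GuardedIn e U ∧ GuardedIn f U
  | mu e, U => GuardedIn e (insert 0 ((· + 1) '' U))
  | nu e, U => GuardedIn e (insert 0 ((· + 1) '' U))

/-- A (closed) expression is guarded if each of its variable occurrences occurs free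
in a subexpression of the form `a·f`. -/
def Guarded (e : Expr 𝒜) : Prop := GuardedIn e ∅

/-- The size of an expression. -/
def size : Expr 𝒜 → ℕ
  | var _ => 1
  | letter _ e => size e + 1
  | zero => 1
  | plus e f => size e + size f + 1
  | top => 1
  | inter e f => size e + size f + 1
  | mu e => size e + 1
  | nu e => size e + 1

end Expr

/-- ω-words over `𝒜`. -/
abbrev Word (𝒜 : Type) := ℕ → 𝒜

/-- ω-languages over `𝒜`. -/
abbrev OLang (𝒜 : Type) := Set (Word 𝒜)

variable {𝒜 : Type}

/-- The tail of an ω-word. -/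
def wtail (w : Word 𝒜) : Word 𝒜 := fun n => w (n + 1)

/-- Prepend a letter to an ω-word. -/
def wcons (a : 𝒜) (w : Word 𝒜) : Word 𝒜 := fun n => match n with | 0 => a | m + 1 => w m

/-- Extend an environment (interpretation of de Bruijn variables) by a language for
variable `0`. -/
def consEnv (A : OLang 𝒜) (ρ : ℕ → OLang 𝒜) : ℕ → OLang 𝒜 :=
  fun n => match n with | 0 => A | m + 1 => ρ m

/-- The language semantics of RLL expressions, relative to an environment interpreting
free variables (this corresponds to admitting languages as constants).  `μ` and `ν` are
interpreted via the Knaster–Tarski characterisation of least and greatest fixed points. -/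
def lang (ρ : ℕ → OLang 𝒜) : Expr 𝒜 → OLang 𝒜
  | Expr.var n => ρ n
  | Expr.letter a e => {w | w 0 = a ∧ wtail w ∈ lang ρ e}
  | Expr.zero => ∅
  | Expr.plus e f => lang ρ e ∪ lang ρ f
  | Expr.top => Set.univ
  | Expr.inter e f => lang ρ e ∩ lang ρ f
  | Expr.mu e => ⋂₀ {A : OLang 𝒜 | lang (consEnv A ρ) e ⊆ A}
  | Expr.nu e => ⋃₀ {A : OLang 𝒜 | A ⊆ lang (consEnv A ρ) e}

/-- The language of a (closed) expression. -/
def Lang0 (e : Expr 𝒜) : OLang 𝒜 := lang (fun _ => ∅) e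

/-- The Fischer–Ladner relation `→_FL`. -/
inductive FLStep : Expr 𝒜 → Expr 𝒜 → Prop
  | letter (a : 𝒜) (e : Expr 𝒜) : FLStep (Expr.letter a e) e
  | plusL (e f : Expr 𝒜) : FLStep (Expr.plus e f) e
  | plusR (e f : Expr 𝒜) : FLStep (Expr.plus e f) f
  | interL (e f : Expr 𝒜) : FLStep (Expr.inter e f) e
  | interR (e f : Expr 𝒜) : FLStep (Expr.inter e f) f
  | mu (e : Expr 𝒜) : FLStep (Expr.mu e) (Expr.subst0 (Expr.mu e) e)
  | nu (e : Expr 𝒜) : FLStep (Expr.nu e) (Expr.subst0 (Expr.nu e) e)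

/-- `f ≤_FL e` : the reflexive-transitive closure of `→_FL`. -/
def FLle (f e : Expr 𝒜) : Prop := Relation.ReflTransGen FLStep e f

/-- The Fischer–Ladner closure of `e`. -/
def FL (e : Expr 𝒜) : Set (Expr 𝒜) := {f | FLle f e}

/-- `f <_FL e`. -/
def FLlt (f e : Expr 𝒜) : Prop := FLle f e ∧ ¬ FLle e f

/-- Immediate (strict) subformula relation: `SubStep e f` iff `e` is an immediate
subexpression of `f`. -/
inductive SubStep : Expr 𝒜 → Expr 𝒜 → Prop
  | letter (a : 𝒜) (e : Expr 𝒜) : SubStep e (Expr.letter a e)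
  | plusL (e f : Expr 𝒜) : SubStep e (Expr.plus e f)
  | plusR (e f : Expr 𝒜) : SubStep f (Expr.plus e f)
  | interL (e f : Expr 𝒜) : SubStep e (Expr.inter e f)
  | interR (e f : Expr 𝒜) : SubStep f (Expr.inter e f)
  | mu (e : Expr 𝒜) : SubStep e (Expr.mu e)
  | nu (e : Expr 𝒜) : SubStep e (Expr.nu e)

/-- The subformula order `e ⊑ f`. -/
def Subformula (e f : Expr 𝒜) : Prop := Relation.ReflTransGen SubStep e f

/-- `e` is a `μ`-formula. -/
def IsMu (e : Expr 𝒜) : Prop := ∃ f, e = Expr.mu f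

/-- `e` is a `ν`-formula. -/
def IsNu (e : Expr 𝒜) : Prop := ∃ f, e = Expr.nu f

/-- `x` occurs infinitely often in the sequence `t`. -/
def InfOcc {α : Type*} (t : ℕ → α) (x : α) : Prop := ∀ N, ∃ n, N ≤ n ∧ t n = x

end RLL
namespace RLL

variable {𝒜 : Type} [Fintype 𝒜] [DecidableEq 𝒜]

/-- A sequent `Γ → Δ` : a pair of finite sets of expressions. -/
abbrev Sequent (𝒜 : Type) [DecidableEq 𝒜] := Finset (Expr 𝒜) × Finset (Expr 𝒜)

/-- Inference steps of the system `LRLL̂_L`. -/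
inductive Step (𝒜 : Type) [Fintype 𝒜] [DecidableEq 𝒜] : Type
  /-- the axiom `Γ, ae, bf → Δ`, for `a ≠ b` -/
  | axPart (Γ Δ : Finset (Expr 𝒜)) (a b : 𝒜) (e f : Expr 𝒜) (hab : a ≠ b)
  /-- the rule `h_a` : from `Γ → Δ` derive `aΓ → aΔ` (`Γ ≠ ∅`) -/
  | hmod (a : 𝒜) (Γ Δ : Finset (Expr 𝒜)) (hne : Γ.Nonempty)
  /-- the rule `p-r` : from the premisses `→ Γ_a` (`a ∈ 𝒜`) derive `→ {aΓ_a}_{a∈𝒜}` -/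
  | partR (Γs : 𝒜 → Finset (Expr 𝒜))
  /-- left weakening -/
  | weakL (Γ Δ : Finset (Expr 𝒜)) (e : Expr 𝒜)
  /-- right weakening -/
  | weakR (Γ Δ : Finset (Expr 𝒜)) (e : Expr 𝒜)
  | zeroL (Γ Δ : Finset (Expr 𝒜))
  | plusL (Γ Δ : Finset (Expr 𝒜)) (e f : Expr 𝒜)
  | topL (Γ Δ : Finset (Expr 𝒜))
  | interL (Γ Δ : Finset (Expr 𝒜)) (e f : Expr 𝒜)
  | muL (Γ Δ : Finset (Expr 𝒜)) (e : Expr 𝒜)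
  | nuL (Γ Δ : Finset (Expr 𝒜)) (e : Expr 𝒜)
  | zeroR (Γ Δ : Finset (Expr 𝒜))
  | plusR (Γ Δ : Finset (Expr 𝒜)) (e f : Expr 𝒜)
  | topR (Γ Δ : Finset (Expr 𝒜))
  | interR (Γ Δ : Finset (Expr 𝒜)) (e f : Expr 𝒜)
  | muR (Γ Δ : Finset (Expr 𝒜)) (e : Expr 𝒜)
  | nuR (Γ Δ : Finset (Expr 𝒜)) (e : Expr 𝒜)

namespace Step

/-- The conclusion of an inference step. -/
def concl : Step 𝒜 → Sequent 𝒜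
  | axPart Γ Δ a b e f _ => (insert (Expr.letter a e) (insert (Expr.letter b f) Γ), Δ)
  | hmod a Γ Δ _ => (Γ.image (Expr.letter a), Δ.image (Expr.letter a))
  | partR Γs => (∅, Finset.univ.biUnion fun a => (Γs a).image (Expr.letter a))
  | weakL Γ Δ e => (insert e Γ, Δ)
  | weakR Γ Δ e => (Γ, insert e Δ)
  | zeroL Γ Δ => (insert Expr.zero Γ, Δ)
  | plusL Γ Δ e f => (insert (Expr.plus e f) Γ, Δ)
  | topL Γ Δ => (insert Expr.top Γ, Δ)
  | interL Γ Δ e f => (insert (Expr.inter e f) Γ, Δ)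
  | muL Γ Δ e => (insert (Expr.mu e) Γ, Δ)
  | nuL Γ Δ e => (insert (Expr.nu e) Γ, Δ)
  | zeroR Γ Δ => (Γ, insert Expr.zero Δ)
  | plusR Γ Δ e f => (Γ, insert (Expr.plus e f) Δ)
  | topR Γ Δ => (Γ, insert Expr.top Δ)
  | interR Γ Δ e f => (Γ, insert (Expr.inter e f) Δ)
  | muR Γ Δ e => (Γ, insert (Expr.mu e) Δ)
  | nuR Γ Δ e => (Γ, insert (Expr.nu e) Δ)

/-- The list of premisses of an inference step. -/
noncomputable def prems : Step 𝒜 → List (Sequent 𝒜)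
  | axPart _ _ _ _ _ _ _ => []
  | hmod _ Γ Δ _ => [(Γ, Δ)]
  | partR Γs => Finset.univ.toList.map fun a => ((∅ : Finset (Expr 𝒜)), Γs a)
  | weakL Γ Δ _ => [(Γ, Δ)]
  | weakR Γ Δ _ => [(Γ, Δ)]
  | zeroL _ _ => []
  | plusL Γ Δ e f => [(insert e Γ, Δ), (insert f Γ, Δ)]
  | topL Γ Δ => [(Γ, Δ)]
  | interL Γ Δ e f => [(insert e (insert f Γ), Δ)]
  | muL Γ Δ e => [(insert (Expr.subst0 (Expr.mu e) e) Γ, Δ)]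
  | nuL Γ Δ e => [(insert (Expr.subst0 (Expr.nu e) e) Γ, Δ)]
  | zeroR Γ Δ => [(Γ, Δ)]
  | plusR Γ Δ e f => [(Γ, insert e (insert f Δ))]
  | topR _ _ => []
  | interR Γ Δ e f => [(Γ, insert e Δ), (Γ, insert f Δ)]
  | muR Γ Δ e => [(Γ, insert (Expr.subst0 (Expr.mu e) e) Δ)]
  | nuR Γ Δ e => [(Γ, insert (Expr.subst0 (Expr.nu e) e) Δ)]

/-- The principal formula (with its side: `false` = LHS, `true` = RHS) of a structural
or logical step. -/
def principal : Step 𝒜 → Option (Bool × Expr 𝒜)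
  | weakL _ _ e => some (false, e)
  | weakR _ _ e => some (true, e)
  | zeroL _ _ => some (false, Expr.zero)
  | plusL _ _ e f => some (false, Expr.plus e f)
  | topL _ _ => some (false, Expr.top)
  | interL _ _ e f => some (false, Expr.inter e f)
  | muL _ _ e => some (false, Expr.mu e)
  | nuL _ _ e => some (false, Expr.nu e)
  | zeroR _ _ => some (true, Expr.zero)
  | plusR _ _ e f => some (true, Expr.plus e f)
  | topR _ _ => some (true, Expr.top)
  | interR _ _ e f => some (true, Expr.inter e f)
  | muR _ _ e => some (true, Expr.mu e)
  | nuR _ _ e => some (true, Expr.nu e)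
  | _ => none

/-- Immediate ancestry: `anc s i x y` holds when the formula `x` (with its side) in the
`i`-th premiss of `s` is an immediate ancestor of the formula `y` in the conclusion. -/
def anc : Step 𝒜 → ℕ → (Bool × Expr 𝒜) → (Bool × Expr 𝒜) → Prop
  | axPart _ _ _ _ _ _ _, _, _, _ => False
  | hmod a _ _ _, _, x, y => ∃ (b : Bool) (g : Expr 𝒜), x = (b, g) ∧ y = (b, Expr.letter a g)
  | partR _, i, x, y =>
      ∃ a : 𝒜, (Finset.univ.toList (α := 𝒜))[i]? = some a ∧
        ∃ g : Expr 𝒜, x = (true, g) ∧ y = (true, Expr.letter a g)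
  | weakL _ _ _, _, x, y => x = y
  | weakR _ _ _, _, x, y => x = y
  | zeroL _ _, _, x, y => x = y
  | plusL _ _ e f, i, x, y =>
      x = y ∨ (y = (false, Expr.plus e f) ∧
        ((i = 0 ∧ x = (false, e)) ∨ (i = 1 ∧ x = (false, f))))
  | topL _ _, _, x, y => x = y
  | interL _ _ e f, _, x, y =>
      x = y ∨ (y = (false, Expr.inter e f) ∧ (x = (false, e) ∨ x = (false, f)))
  | muL _ _ e, _, x, y =>
      x = y ∨ (y = (false, Expr.mu e) ∧ x = (false, Expr.subst0 (Expr.mu e) e))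
  | nuL _ _ e, _, x, y =>
      x = y ∨ (y = (false, Expr.nu e) ∧ x = (false, Expr.subst0 (Expr.nu e) e))
  | zeroR _ _, _, x, y => x = y
  | plusR _ _ e f, _, x, y =>
      x = y ∨ (y = (true, Expr.plus e f) ∧ (x = (true, e) ∨ x = (true, f)))
  | topR _ _, _, x, y => x = y
  | interR _ _ e f, i, x, y =>
      x = y ∨ (y = (true, Expr.inter e f) ∧
        ((i = 0 ∧ x = (true, e)) ∨ (i = 1 ∧ x = (true, f))))
  | muR _ _ e, _, x, y =>
      x = y ∨ (y = (true, Expr.mu e) ∧ x = (true, Expr.subst0 (Expr.mu e) e))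
  | nuR _ _ e, _, x, y =>
      x = y ∨ (y = (true, Expr.nu e) ∧ x = (true, Expr.subst0 (Expr.nu e) e))

end Step

/-- The formula `x` (with side) occurs in the sequent `S`. -/
def memSeq (x : Bool × Expr 𝒜) (S : Sequent 𝒜) : Prop :=
  if x.1 then x.2 ∈ S.2 else x.2 ∈ S.1

/-- `τ` is a trace starting at depth `k` along a branch given by steps `s` and premiss
choices `d` : `τ i` occurs in the sequent at depth `k+i` and `τ (i+1)` is an immediate
ancestor of `τ i`. -/
def IsTraceAlong (s : ℕ → Step 𝒜) (d : ℕ → ℕ) (k : ℕ) (τ : ℕ → Bool × Expr 𝒜) : Prop :=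
  (∀ i, memSeq (τ i) (Step.concl (s (k + i)))) ∧
  (∀ i, Step.anc (s (k + i)) (d (k + i)) (τ (i + 1)) (τ i))

/-- The trace formula is principal at stage `i`. -/
def PrincAt (s : ℕ → Step 𝒜) (k : ℕ) (τ : ℕ → Bool × Expr 𝒜) (i : ℕ) : Prop :=
  Step.principal (s (k + i)) = some (τ i)

/-- `g` occurs infinitely often principally along the trace `τ`. -/
def InfOftenPrinc (s : ℕ → Step 𝒜) (k : ℕ) (τ : ℕ → Bool × Expr 𝒜) (g : Expr 𝒜) : Prop :=
  ∀ N, ∃ i, N ≤ i ∧ (τ i).2 = g ∧ PrincAt s k τ i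

/-- A progressing trace along a branch: infinitely often principal, and either an LHS
trace whose smallest infinitely often principal formula is a `μ`-formula, or an RHS
trace whose smallest infinitely often principal formula is a `ν`-formula. -/
def ProgressingTrace (s : ℕ → Step 𝒜) (d : ℕ → ℕ) (k : ℕ) (τ : ℕ → Bool × Expr 𝒜) : Prop :=
  IsTraceAlong s d k τ ∧ (∀ N, ∃ i, N ≤ i ∧ PrincAt s k τ i) ∧
  (((∀ i, (τ i).1 = false) ∧ ∃ g, InfOftenPrinc s k τ g ∧ IsMu g ∧
      ∀ g', InfOftenPrinc s k τ g' → Subformula g g') ∨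
   ((∀ i, (τ i).1 = true) ∧ ∃ g, InfOftenPrinc s k τ g ∧ IsNu g ∧
      ∀ g', InfOftenPrinc s k τ g' → Subformula g g'))

/-- A branch (given by its steps and premiss choices) has a progressing trace. -/
def ProgressingAlong (s : ℕ → Step 𝒜) (d : ℕ → ℕ) : Prop :=
  ∃ k τ, ProgressingTrace s d k τ

/-- Preproofs: possibly infinite trees, coinductively generated by the rules of
`LRLL̂_L`, here represented by their labelling function on tree positions. -/
structure Preproof (𝒜 : Type) [Fintype 𝒜] [DecidableEq 𝒜] : Type where
  /-- the step at each node of the tree (`none` = no node) -/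
  label : List ℕ → Option (Step 𝒜)
  root_isSome : (label []).isSome
  /-- the children of a node are exactly the premisses of its step -/
  child : ∀ p s, label p = some s → ∀ i : ℕ,
      (Step.prems s)[i]? = Option.map Step.concl (label (p ++ [i]))
  outside : ∀ p, label p = none → ∀ i, label (p ++ [i]) = none

namespace Preproof

/-- The subtree rooted at a position. -/
def subtreeAt (P : Preproof 𝒜) (p : List ℕ) : List ℕ → Option (Step 𝒜) :=
  fun q => P.label (p ++ q)

/-- A preproof is regular (cyclic) if it has only finitely many distinct subtrees. -/
def Regular (P : Preproof 𝒜) : Prop :=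
  Set.Finite {t : List ℕ → Option (Step 𝒜) | ∃ p, (P.label p).isSome ∧ t = P.subtreeAt p}

/-- `P` is a preproof of the sequent `S`. -/
def IsProofOf (P : Preproof 𝒜) (S : Sequent 𝒜) : Prop :=
  ∃ s, P.label [] = some s ∧ Step.concl s = S

/-- A preproof is progressing if every infinite branch carries a progressing trace. -/
def Progressing (P : Preproof 𝒜) : Prop :=
  ∀ (b : ℕ → ℕ) (s : ℕ → Step 𝒜),
    (∀ n, P.label ((List.range n).map b) = some (s n)) → ProgressingAlong s b

end Preproof

/-- `CRLL_L ⊢ S` : there is a regular progressing preproof of `S`. -/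
def CRLLProves (S : Sequent 𝒜) : Prop :=
  ∃ P : Preproof 𝒜, P.IsProofOf S ∧ P.Regular ∧ P.Progressing

/-- Validity of a sequent in the language model: `⋂_{e∈Γ} L(e) ⊆ ⋃_{f∈Δ} L(f)`. -/
def SeqValid (S : Sequent 𝒜) : Prop :=
  (⋂ e ∈ (S.1 : Set (Expr 𝒜)), Lang0 e) ⊆ ⋃ f ∈ (S.2 : Set (Expr 𝒜)), Lang0 f

end RLL
namespace RLL

variable {𝒜 : Type} [Fintype 𝒜] [DecidableEq 𝒜]

/-- Histories of the proof search game: past moves, i.e. pairs of an inference step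
(chosen by Prover) and a premiss index (chosen by Denier). -/
abbrev PHist (𝒜 : Type) [Fintype 𝒜] [DecidableEq 𝒜] := List (Step 𝒜 × ℕ)

/-- A Prover strategy: given the history and the current sequent, choose an inference
step (which should have the current sequent as conclusion). -/
abbrev ProverStrat (𝒜 : Type) [Fintype 𝒜] [DecidableEq 𝒜] :=
  PHist 𝒜 → Sequent 𝒜 → Step 𝒜

/-- A Denier strategy: given the history and the step chosen by Prover, choose a
premiss index. -/
abbrev DenierStrat (𝒜 : Type) [Fintype 𝒜] [DecidableEq 𝒜] :=
  PHist 𝒜 → Step 𝒜 → ℕ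

/-- The current sequent after playing the history `h` from `S₀` (`none` if the history
is incoherent). -/
noncomputable def seqAfter (S₀ : Sequent 𝒜) (h : PHist 𝒜) : Option (Sequent 𝒜) :=
  h.foldl
    (fun oS m => oS.bind fun S => if Step.concl m.1 = S then (Step.prems m.1)[m.2]? else none)
    (some S₀)

/-- The history `h` is coherent and consistent with Prover playing `σP` from `S₀`. -/
def HistConsP (σP : ProverStrat 𝒜) (S₀ : Sequent 𝒜) (h : PHist 𝒜) : Prop :=
  (seqAfter S₀ h).isSome ∧
    ∀ h₁ st i h₂, h = h₁ ++ (st, i) :: h₂ → ∃ S, seqAfter S₀ h₁ = some S ∧ σP h₁ S = st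

/-- The history `h` is coherent and consistent with Denier playing `σD` from `S₀`. -/
def HistConsD (σD : DenierStrat 𝒜) (S₀ : Sequent 𝒜) (h : PHist 𝒜) : Prop :=
  (seqAfter S₀ h).isSome ∧ ∀ h₁ st i h₂, h = h₁ ++ (st, i) :: h₂ → i = σD h₁ st

/-- The history determined by the first `n` rounds of an infinite play. -/
def histSeq (s : ℕ → Step 𝒜) (d : ℕ → ℕ) (n : ℕ) : PHist 𝒜 :=
  (List.range n).map fun k => (s k, d k)

/-- `(s, d)` is an infinite play from `S₀` in which Prover follows `σP`. -/
def InfPlayConsP (σP : ProverStrat 𝒜) (S₀ : Sequent 𝒜) (s : ℕ → Step 𝒜) (d : ℕ → ℕ) : Prop :=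
  Step.concl (s 0) = S₀ ∧
  (∀ n, (Step.prems (s n))[d n]? = some (Step.concl (s (n + 1)))) ∧
  (∀ n, s n = σP (histSeq s d n) (Step.concl (s n)))

/-- `(s, d)` is an infinite play from `S₀` in which Denier follows `σD`. -/
def InfPlayConsD (σD : DenierStrat 𝒜) (S₀ : Sequent 𝒜) (s : ℕ → Step 𝒜) (d : ℕ → ℕ) : Prop :=
  Step.concl (s 0) = S₀ ∧
  (∀ n, (Step.prems (s n))[d n]? = some (Step.concl (s (n + 1)))) ∧
  (∀ n, d n = σD (histSeq s d n) (s n))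

/-- `σP` is a winning Prover strategy from `S₀` : at every reachable position Prover
has a legal move and makes one, every finite play is lost by Denier (Prover is never
deadlocked), and every infinite consistent play produces a branch with a progressing
trace. -/
def ProverWinningStrat (σP : ProverStrat 𝒜) (S₀ : Sequent 𝒜) : Prop :=
  (∀ h S, HistConsP σP S₀ h → seqAfter S₀ h = some S → Step.concl (σP h S) = S) ∧
  (∀ s d, InfPlayConsP σP S₀ s d → ProgressingAlong s d)

/-- `σD` is a winning Denier strategy from `S₀` : at any reachable position, any step
Prover may legally choose has a nonempty list of premisses (Denier is never deadlocked,
in particular Prover can never apply an axiom), `σD` answers with an actual premiss,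
and every infinite consistent play produces a branch with no progressing trace. -/
def DenierWinningStrat (σD : DenierStrat 𝒜) (S₀ : Sequent 𝒜) : Prop :=
  (∀ h S st, HistConsD σD S₀ h → seqAfter S₀ h = some S → Step.concl st = S →
     ((Step.prems st)[σD h st]?).isSome) ∧
  (∀ s d, InfPlayConsD σD S₀ s d → ¬ ProgressingAlong s d)

/-- A Prover strategy computed with a bounded amount of memory. -/
def FiniteMemoryP (σP : ProverStrat 𝒜) : Prop :=
  ∃ (Mem : Type) (_ : Finite Mem) (m₀ : Mem) (upd : Mem → Step 𝒜 × ℕ → Mem)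
    (out : Mem → Sequent 𝒜 → Step 𝒜), ∀ h S, σP h S = out (h.foldl upd m₀) S

/-- A Denier strategy computed with a bounded amount of memory (a "regular" strategy). -/
def FiniteMemoryD (σD : DenierStrat 𝒜) : Prop :=
  ∃ (Mem : Type) (_ : Finite Mem) (m₀ : Mem) (upd : Mem → Step 𝒜 × ℕ → Mem)
    (out : Mem → Step 𝒜 → ℕ), ∀ h st, σD h st = out (h.foldl upd m₀) st

end RLL
namespace RLL

variable {𝒜 : Type} [Fintype 𝒜] [DecidableEq 𝒜]

/-- `g` is a formula to which a (left or right) logical rule applies. -/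
def IsLogicalF (g : Expr 𝒜) : Prop :=
  g = Expr.zero ∨ g = Expr.top ∨ (∃ e f, g = Expr.plus e f) ∨
    (∃ e f, g = Expr.inter e f) ∨ (∃ e, g = Expr.mu e) ∨ (∃ e, g = Expr.nu e)

/-- `st` is a (left or right) logical step. -/
def IsLogicalStep : Step 𝒜 → Prop
  | Step.zeroL _ _ => True
  | Step.plusL _ _ _ _ => True
  | Step.topL _ _ => True
  | Step.interL _ _ _ _ => True
  | Step.muL _ _ _ => True
  | Step.nuL _ _ _ => True
  | Step.zeroR _ _ => True
  | Step.plusR _ _ _ _ => True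
  | Step.topR _ _ => True
  | Step.interR _ _ _ _ => True
  | Step.muR _ _ _ => True
  | Step.nuR _ _ _ => True
  | _ => False

/-- The proof search strategy `𝔰_P`, as a conformance predicate on the step chosen at
a current sequent `S` : apply logical rules maximally (bottom-up); at a sequent
`Γ, ae, bf → Δ` with `a ≠ b` apply the left partition axiom; at a sequent
`aΓ → {bΔ_b}_{b∈𝒜}` with `Γ ≠ ∅` weaken all `bΔ_b` for `b ≠ a` and then apply `h_a`;
at a sequent `→ {aΔ_a}_{a∈𝒜}` apply the right partition rule. -/
def CanonicalStep (S : Sequent 𝒜) (st : Step 𝒜) : Prop :=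
  Step.concl st = S ∧
  (((∃ g, (g ∈ S.1 ∨ g ∈ S.2) ∧ IsLogicalF g) ∧ IsLogicalStep st) ∨
   ((¬ ∃ g, (g ∈ S.1 ∨ g ∈ S.2) ∧ IsLogicalF g) ∧
     (((∃ a b e f, a ≠ b ∧ Expr.letter a e ∈ S.1 ∧ Expr.letter b f ∈ S.1) ∧
         (∃ Γ Δ a b e f hab, st = Step.axPart Γ Δ a b e f hab)) ∨
      ((¬ ∃ a b e f, a ≠ b ∧ Expr.letter a e ∈ S.1 ∧ Expr.letter b f ∈ S.1) ∧
        S.1.Nonempty ∧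
        (∃ a, (∀ g ∈ S.1, ∃ g', g = Expr.letter a g') ∧
          ((∃ b h, b ≠ a ∧ Expr.letter b h ∈ S.2 ∧
              st = Step.weakR S.1 (S.2.erase (Expr.letter b h)) (Expr.letter b h)) ∨
           ((∀ b h, Expr.letter b h ∈ S.2 → b = a) ∧
              ∃ Γ Δ hne, st = Step.hmod a Γ Δ hne)))) ∨
      (S.1 = ∅ ∧ ∃ Γs, st = Step.partR Γs))))

end RLL
namespace RLL

/-! ### Auxiliary semantic lemmas -/

section Semantics

variable {𝒜 : Type}

lemma wtail_wcons (a : 𝒜) (w : Word 𝒜) : wtail (wcons a w) = w := rfl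

lemma lang_rename (e : Expr 𝒜) : ∀ (f : ℕ → ℕ) (ρ : ℕ → OLang 𝒜),
    lang ρ (e.rename f) = lang (fun n => ρ (f n)) e := by
  induction e with
  | var n => intro f ρ; rfl
  | letter a e ih => intro f ρ; simp only [Expr.rename, lang, ih]
  | zero => intro f ρ; rfl
  | plus e g ihe ihg => intro f ρ; simp only [Expr.rename, lang, ihe, ihg]
  | top => intro f ρ; rfl
  | inter e g ihe ihg => intro f ρ; simp only [Expr.rename, lang, ihe, ihg]
  | mu e ih =>
    intro f ρ
    have key : ∀ A : OLang 𝒜,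
        lang (consEnv A ρ) (Expr.rename (fun n => match n with
          | 0 => 0 | m + 1 => f m + 1) e)
        = lang (consEnv A (fun n => ρ (f n))) e := by
      intro A
      rw [ih]
      refine congrArg (fun ρ' => lang ρ' e) (funext fun n => ?_)
      cases n <;> rfl
    simp only [Expr.rename, lang, key]
  | nu e ih =>
    intro f ρ
    have key : ∀ A : OLang 𝒜,
        lang (consEnv A ρ) (Expr.rename (fun n => match n with
          | 0 => 0 | m + 1 => f m + 1) e)
        = lang (consEnv A (fun n => ρ (f n))) e := by
      intro A
      rw [ih]
      refine congrArg (fun ρ' => lang ρ' e) (funext fun n => ?_)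
      cases n <;> rfl
    simp only [Expr.rename, lang, key]

lemma lang_subst (e : Expr 𝒜) : ∀ (σ : ℕ → Expr 𝒜) (ρ : ℕ → OLang 𝒜),
    lang ρ (Expr.subst σ e) = lang (fun n => lang ρ (σ n)) e := by
  induction e with
  | var n => intro σ ρ; rfl
  | letter a e ih => intro σ ρ; simp only [Expr.subst, lang, ih]
  | zero => intro σ ρ; rfl
  | plus e g ihe ihg => intro σ ρ; simp only [Expr.subst, lang, ihe, ihg]
  | top => intro σ ρ; rfl
  | inter e g ihe ihg => intro σ ρ; simp only [Expr.subst, lang, ihe, ihg]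
  | mu e ih =>
    intro σ ρ
    have key : ∀ A : OLang 𝒜,
        lang (consEnv A ρ) (Expr.subst (fun n => match n with
          | 0 => Expr.var 0 | m + 1 => Expr.rename Nat.succ (σ m)) e)
        = lang (consEnv A (fun n => lang ρ (σ n))) e := by
      intro A
      rw [ih]
      refine congrArg (fun ρ' => lang ρ' e) (funext fun n => ?_)
      cases n with
      | zero => rfl
      | succ m =>
        show lang (consEnv A ρ) (Expr.rename Nat.succ (σ m)) = lang ρ (σ m)
        rw [lang_rename]
        rfl
    simp only [Expr.subst, lang, key]
  | nu e ih =>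
    intro σ ρ
    have key : ∀ A : OLang 𝒜,
        lang (consEnv A ρ) (Expr.subst (fun n => match n with
          | 0 => Expr.var 0 | m + 1 => Expr.rename Nat.succ (σ m)) e)
        = lang (consEnv A (fun n => lang ρ (σ n))) e := by
      intro A
      rw [ih]
      refine congrArg (fun ρ' => lang ρ' e) (funext fun n => ?_)
      cases n with
      | zero => rfl
      | succ m =>
        show lang (consEnv A ρ) (Expr.rename Nat.succ (σ m)) = lang ρ (σ m)
        rw [lang_rename]
        rfl
    simp only [Expr.subst, lang, key]

lemma lang_subst0 (f e : Expr 𝒜) (ρ : ℕ → OLang 𝒜) :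
    lang ρ (Expr.subst0 f e) = lang (consEnv (lang ρ f) ρ) e := by
  rw [Expr.subst0, lang_subst]
  refine congrArg (fun ρ' => lang ρ' e) (funext fun n => ?_)
  cases n <;> rfl

lemma lang_mono (e : Expr 𝒜) : ∀ (ρ ρ' : ℕ → OLang 𝒜),
    (∀ n, ρ n ⊆ ρ' n) → lang ρ e ⊆ lang ρ' e := by
  induction e with
  | var n => intro ρ ρ' h; exact h n
  | letter a e ih =>
    intro ρ ρ' h w hw
    exact ⟨hw.1, ih _ _ h hw.2⟩
  | zero => intro ρ ρ' h; exact le_refl _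
  | plus e g ihe ihg =>
    intro ρ ρ' h
    exact Set.union_subset_union (ihe _ _ h) (ihg _ _ h)
  | top => intro ρ ρ' h; exact le_refl _
  | inter e g ihe ihg =>
    intro ρ ρ' h
    exact Set.inter_subset_inter (ihe _ _ h) (ihg _ _ h)
  | mu e ih =>
    intro ρ ρ' h
    simp only [lang]
    intro w hw
    intro A hA
    refine hw A ?_
    refine Set.Subset.trans (ih (consEnv A ρ) (consEnv A ρ') ?_) hA
    intro n; cases n with
    | zero => exact le_refl _
    | succ m => exact h m
  | nu e ih =>
    intro ρ ρ' h
    simp only [lang]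
    apply Set.sUnion_mono
    intro A hA
    refine Set.Subset.trans hA (ih (consEnv A ρ) (consEnv A ρ') ?_)
    intro n; cases n with
    | zero => exact le_refl _
    | succ m => exact h m

lemma consEnv_mono {ρ : ℕ → OLang 𝒜} {A B : OLang 𝒜} (h : A ⊆ B) :
    ∀ n, consEnv A ρ n ⊆ consEnv B ρ n := by
  intro n; cases n with
  | zero => exact h
  | succ m => exact le_refl _

lemma lang_mu_unfold (ρ : ℕ → OLang 𝒜) (e : Expr 𝒜) :
    lang ρ (Expr.mu e) = lang (consEnv (lang ρ (Expr.mu e)) ρ) e := by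
  have hmono : ∀ (A B : OLang 𝒜), A ⊆ B →
      lang (consEnv A ρ) e ⊆ lang (consEnv B ρ) e :=
    fun A B h => lang_mono e _ _ (consEnv_mono h)
  have hLdef : lang ρ (Expr.mu e)
      = ⋂₀ {A : OLang 𝒜 | lang (consEnv A ρ) e ⊆ A} := rfl
  have hsub : lang (consEnv (lang ρ (Expr.mu e)) ρ) e ⊆ lang ρ (Expr.mu e) := by
    rw [hLdef]
    intro w hw A hA
    refine hA (hmono _ _ ?_ hw)
    exact Set.sInter_subset_of_mem hA
  have hsup : lang ρ (Expr.mu e) ⊆ lang (consEnv (lang ρ (Expr.mu e)) ρ) e := by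
    conv_lhs => rw [hLdef]
    exact Set.sInter_subset_of_mem (hmono _ _ hsub)
  exact le_antisymm hsup hsub

lemma lang_nu_unfold (ρ : ℕ → OLang 𝒜) (e : Expr 𝒜) :
    lang ρ (Expr.nu e) = lang (consEnv (lang ρ (Expr.nu e)) ρ) e := by
  have hmono : ∀ (A B : OLang 𝒜), A ⊆ B →
      lang (consEnv A ρ) e ⊆ lang (consEnv B ρ) e :=
    fun A B h => lang_mono e _ _ (consEnv_mono h)
  have hLdef : lang ρ (Expr.nu e)
      = ⋃₀ {A : OLang 𝒜 | A ⊆ lang (consEnv A ρ) e} := rfl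
  have hsub : lang ρ (Expr.nu e) ⊆ lang (consEnv (lang ρ (Expr.nu e)) ρ) e := by
    refine fun w hw => ?_
    rw [hLdef] at hw
    obtain ⟨A, hA, hwA⟩ := hw
    refine hmono A _ ?_ (hA hwA)
    rw [hLdef]
    exact Set.subset_sUnion_of_mem hA
  have hsup : lang (consEnv (lang ρ (Expr.nu e)) ρ) e ⊆ lang ρ (Expr.nu e) := by
    conv_rhs => rw [hLdef]
    exact Set.subset_sUnion_of_mem (hmono _ _ hsub)
  exact le_antisymm hsub hsup

lemma Lang0_mu_unfold (e : Expr 𝒜) :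
    Lang0 (Expr.subst0 (Expr.mu e) e) = Lang0 (Expr.mu e) := by
  rw [Lang0, lang_subst0, ← lang_mu_unfold]; rfl

lemma Lang0_nu_unfold (e : Expr 𝒜) :
    Lang0 (Expr.subst0 (Expr.nu e) e) = Lang0 (Expr.nu e) := by
  rw [Lang0, lang_subst0, ← lang_nu_unfold]; rfl

lemma mem_Lang0_letter {a : 𝒜} {e : Expr 𝒜} {w : Word 𝒜} :
    w ∈ Lang0 (Expr.letter a e) ↔ w 0 = a ∧ wtail w ∈ Lang0 e := Iff.rfl

end Semantics

section Valid

variable {𝒜 : Type} [Fintype 𝒜] [DecidableEq 𝒜]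

lemma seqValid_iff (Γ Δ : Finset (Expr 𝒜)) :
    SeqValid (Γ, Δ) ↔ ∀ w : Word 𝒜,
      (∀ g ∈ Γ, w ∈ Lang0 g) → ∃ g ∈ Δ, w ∈ Lang0 g := by
  simp [SeqValid, Set.subset_def]

/-- Validity of canonical steps is preserved from conclusion to premisses. -/
lemma step_sound (st : Step 𝒜) (S : Sequent 𝒜) (hc : CanonicalStep S st)
    (hv : SeqValid S) {i : ℕ} {S' : Sequent 𝒜}
    (hp : (Step.prems st)[i]? = some S') : SeqValid S' := by
  obtain ⟨hconcl, hc2⟩ := hc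
  subst hconcl
  cases st with
  | axPart Γ Δ a b e f hab => simp [Step.prems] at hp
  | hmod a Γ Δ hne =>
    rcases i with _ | i
    · simp only [Step.prems, List.getElem?_cons_zero, Option.some.injEq] at hp
      subst hp
      rw [seqValid_iff]
      intro w hw
      have hv' := (seqValid_iff _ _).1 hv (wcons a w) ?_
      · obtain ⟨g, hg, hwg⟩ := hv'
        simp only [Finset.mem_image] at hg
        obtain ⟨g', hg', rfl⟩ := hg
        exact ⟨g', hg', hwg.2⟩
      · intro g hg
        simp only [Finset.mem_image] at hg
        obtain ⟨g', hg', rfl⟩ := hg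
        exact ⟨rfl, hw g' hg'⟩
    · simp [Step.prems] at hp
  | partR Γs =>
    simp only [Step.prems, List.getElem?_map] at hp
    obtain ⟨a, ha, rfl⟩ : ∃ a, (Finset.univ.toList (α := 𝒜))[i]? = some a ∧
        S' = (∅, Γs a) := by
      cases h : (Finset.univ.toList (α := 𝒜))[i]? with
      | none => rw [h] at hp; simp at hp
      | some a =>
        rw [h] at hp
        simp only [Option.map_some, Option.some.injEq] at hp
        exact ⟨a, rfl, hp.symm⟩
    rw [seqValid_iff]
    intro w _
    have hv' := (seqValid_iff _ _).1 hv (wcons a w) (by simp)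
    obtain ⟨g, hg, hwg⟩ := hv'
    simp only [Finset.mem_biUnion, Finset.mem_univ, true_and, Finset.mem_image] at hg
    obtain ⟨b, g', hg', rfl⟩ := hg
    have hb : b = a := by
      have := hwg.1
      simpa [wcons] using this.symm
    subst hb
    exact ⟨g', hg', hwg.2⟩
  | weakL Γ Δ e =>
    exfalso
    rcases hc2 with ⟨_, hlog⟩ | ⟨_, h⟩
    · exact hlog
    · rcases h with ⟨_, _, _, _, _, _, _, _, heq⟩ | ⟨_, _, _, heq⟩ | ⟨_, _, heq⟩ <;>
        simp_all
  | weakR Γ Δ e =>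
    rcases i with _ | i
    swap
    · simp [Step.prems] at hp
    simp only [Step.prems, List.getElem?_cons_zero, Option.some.injEq] at hp
    subst hp
    rcases hc2 with ⟨_, hlog⟩ | ⟨_, h⟩
    · exact hlog.elim
    rcases h with ⟨_, ⟨_, _, _, _, _, _, _, heq⟩⟩ | ⟨_, hne, a, ha, hcase⟩ | ⟨_, _, heq⟩
    · exact absurd heq (by simp)
    swap
    · exact absurd heq (by simp)
    rcases hcase with ⟨b, g, hba, hbmem, heq⟩ | ⟨_, _, _, _, heq⟩
    swap
    · exact absurd heq (by simp)
    have hΓ : Γ = (Step.concl (Step.weakR Γ Δ e)).1 := rfl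
    obtain ⟨hΓeq, hΔeq, heeq⟩ : Γ = Γ ∧
        Δ = ((Γ, insert e Δ) : Sequent 𝒜).2.erase (Expr.letter b g) ∧
        e = Expr.letter b g := by
      injection heq with h1 h2 h3
      exact ⟨h1, h2, h3⟩
    subst heeq
    rw [seqValid_iff]
    intro w hw
    obtain ⟨g₀, hg₀⟩ := hne
    obtain ⟨g₀', rfl⟩ := ha g₀ hg₀
    have hw0 : w 0 = a := (hw _ hg₀).1
    have hv' := (seqValid_iff _ _).1 hv w hw
    obtain ⟨g₁, hg₁, hwg₁⟩ := hv'
    rcases Finset.mem_insert.1 hg₁ with rfl | hg₁'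
    · exact absurd (hwg₁.1.symm.trans hw0) hba
    · exact ⟨g₁, hg₁', hwg₁⟩
  | zeroL Γ Δ => simp [Step.prems] at hp
  | plusL Γ Δ e f =>
    have hvalid' : ∀ g, Lang0 g ⊆ Lang0 (Expr.plus e f) → SeqValid (insert g Γ, Δ) := by
      intro g hsub
      rw [seqValid_iff]
      intro w hw
      refine (seqValid_iff _ _).1 hv w ?_
      intro g' hg'
      rcases Finset.mem_insert.1 hg' with rfl | hg''
      · exact hsub (hw g (Finset.mem_insert_self _ _))
      · exact hw g' (Finset.mem_insert_of_mem hg'')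
    rcases i with _ | _ | i
    · simp only [Step.prems, List.getElem?_cons_zero, Option.some.injEq] at hp
      subst hp
      exact hvalid' e (by intro w hw; exact Or.inl hw)
    · simp only [Step.prems, List.getElem?_cons_succ, List.getElem?_cons_zero,
        Option.some.injEq] at hp
      subst hp
      exact hvalid' f (by intro w hw; exact Or.inr hw)
    · simp [Step.prems] at hp
  | topL Γ Δ =>
    rcases i with _ | i
    swap
    · simp [Step.prems] at hp
    simp only [Step.prems, List.getElem?_cons_zero, Option.some.injEq] at hp
    subst hp
    rw [seqValid_iff]
    intro w hw
    refine (seqValid_iff _ _).1 hv w ?_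
    intro g hg
    rcases Finset.mem_insert.1 hg with rfl | hg'
    · exact Set.mem_univ w
    · exact hw g hg'
  | interL Γ Δ e f =>
    rcases i with _ | i
    swap
    · simp [Step.prems] at hp
    simp only [Step.prems, List.getElem?_cons_zero, Option.some.injEq] at hp
    subst hp
    rw [seqValid_iff]
    intro w hw
    refine (seqValid_iff _ _).1 hv w ?_
    intro g hg
    rcases Finset.mem_insert.1 hg with rfl | hg'
    · exact ⟨hw e (Finset.mem_insert_self _ _),
        hw f (Finset.mem_insert_of_mem (Finset.mem_insert_self _ _))⟩
    · exact hw g (Finset.mem_insert_of_mem (Finset.mem_insert_of_mem hg'))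
  | muL Γ Δ e =>
    rcases i with _ | i
    swap
    · simp [Step.prems] at hp
    simp only [Step.prems, List.getElem?_cons_zero, Option.some.injEq] at hp
    subst hp
    rw [seqValid_iff]
    intro w hw
    refine (seqValid_iff _ _).1 hv w ?_
    intro g hg
    rcases Finset.mem_insert.1 hg with rfl | hg'
    · rw [← Lang0_mu_unfold]
      exact hw _ (Finset.mem_insert_self _ _)
    · exact hw g (Finset.mem_insert_of_mem hg')
  | nuL Γ Δ e =>
    rcases i with _ | i
    swap
    · simp [Step.prems] at hp
    simp only [Step.prems, List.getElem?_cons_zero, Option.some.injEq] at hp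
    subst hp
    rw [seqValid_iff]
    intro w hw
    refine (seqValid_iff _ _).1 hv w ?_
    intro g hg
    rcases Finset.mem_insert.1 hg with rfl | hg'
    · rw [← Lang0_nu_unfold]
      exact hw _ (Finset.mem_insert_self _ _)
    · exact hw g (Finset.mem_insert_of_mem hg')
  | zeroR Γ Δ =>
    rcases i with _ | i
    swap
    · simp [Step.prems] at hp
    simp only [Step.prems, List.getElem?_cons_zero, Option.some.injEq] at hp
    subst hp
    rw [seqValid_iff]
    intro w hw
    obtain ⟨g, hg, hwg⟩ := (seqValid_iff _ _).1 hv w hw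
    rcases Finset.mem_insert.1 hg with rfl | hg'
    · exact absurd hwg (by simp [Lang0, lang])
    · exact ⟨g, hg', hwg⟩
  | plusR Γ Δ e f =>
    rcases i with _ | i
    swap
    · simp [Step.prems] at hp
    simp only [Step.prems, List.getElem?_cons_zero, Option.some.injEq] at hp
    subst hp
    rw [seqValid_iff]
    intro w hw
    obtain ⟨g, hg, hwg⟩ := (seqValid_iff _ _).1 hv w hw
    rcases Finset.mem_insert.1 hg with rfl | hg'
    · rcases hwg with hwe | hwf
      · exact ⟨e, Finset.mem_insert_self _ _, hwe⟩
      · exact ⟨f, Finset.mem_insert_of_mem (Finset.mem_insert_self _ _), hwf⟩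
    · exact ⟨g, Finset.mem_insert_of_mem (Finset.mem_insert_of_mem hg'), hwg⟩
  | topR Γ Δ => simp [Step.prems] at hp
  | interR Γ Δ e f =>
    have hvalid' : ∀ g, Lang0 (Expr.inter e f) ⊆ Lang0 g → SeqValid (Γ, insert g Δ) := by
      intro g hsub
      rw [seqValid_iff]
      intro w hw
      obtain ⟨g', hg', hwg'⟩ := (seqValid_iff _ _).1 hv w hw
      rcases Finset.mem_insert.1 hg' with rfl | hg''
      · exact ⟨g, Finset.mem_insert_self _ _, hsub hwg'⟩
      · exact ⟨g', Finset.mem_insert_of_mem hg'', hwg'⟩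
    rcases i with _ | _ | i
    · simp only [Step.prems, List.getElem?_cons_zero, Option.some.injEq] at hp
      subst hp
      exact hvalid' e (fun w hw => hw.1)
    · simp only [Step.prems, List.getElem?_cons_succ, List.getElem?_cons_zero,
        Option.some.injEq] at hp
      subst hp
      exact hvalid' f (fun w hw => hw.2)
    · simp [Step.prems] at hp
  | muR Γ Δ e =>
    rcases i with _ | i
    swap
    · simp [Step.prems] at hp
    simp only [Step.prems, List.getElem?_cons_zero, Option.some.injEq] at hp
    subst hp
    rw [seqValid_iff]
    intro w hw
    obtain ⟨g, hg, hwg⟩ := (seqValid_iff _ _).1 hv w hw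
    rcases Finset.mem_insert.1 hg with rfl | hg'
    · rw [← Lang0_mu_unfold] at hwg
      exact ⟨_, Finset.mem_insert_self _ _, hwg⟩
    · exact ⟨g, Finset.mem_insert_of_mem hg', hwg⟩
  | nuR Γ Δ e =>
    rcases i with _ | i
    swap
    · simp [Step.prems] at hp
    simp only [Step.prems, List.getElem?_cons_zero, Option.some.injEq] at hp
    subst hp
    rw [seqValid_iff]
    intro w hw
    obtain ⟨g, hg, hwg⟩ := (seqValid_iff _ _).1 hv w hw
    rcases Finset.mem_insert.1 hg with rfl | hg'
    · rw [← Lang0_nu_unfold] at hwg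
      exact ⟨_, Finset.mem_insert_self _ _, hwg⟩
    · exact ⟨g, Finset.mem_insert_of_mem hg', hwg⟩

lemma seqAfter_foldl_none (l : PHist 𝒜) (S₀ : Sequent 𝒜) :
    l.foldl (fun (oS : Option (Sequent 𝒜)) m =>
      oS.bind fun S => if Step.concl m.1 = S then (Step.prems m.1)[m.2]? else none)
      none = none := by
  induction l with
  | nil => rfl
  | cons x l ih => simpa using ih

lemma seqAfter_concat (S₀ : Sequent 𝒜) (h : PHist 𝒜) (x : Step 𝒜 × ℕ) :
    seqAfter S₀ (h ++ [x]) = (seqAfter S₀ h).bind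
      (fun S => if Step.concl x.1 = S then (Step.prems x.1)[x.2]? else none) := by
  simp [seqAfter, List.foldl_append]

lemma histConsP_prefix (σP : ProverStrat 𝒜) (S₀ : Sequent 𝒜) (h : PHist 𝒜)
    (x : Step 𝒜 × ℕ) (hc : HistConsP σP S₀ (h ++ [x])) : HistConsP σP S₀ h := by
  obtain ⟨h1, h2⟩ := hc
  constructor
  · rw [seqAfter_concat] at h1
    cases hs : seqAfter S₀ h with
    | none => rw [hs] at h1; simp at h1
    | some S => simp
  · intro h₁ st i h₂ heq
    exact h2 h₁ st i (h₂ ++ [x]) (by rw [heq]; simp)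

end Valid

/-- The proof search strategy `𝔰_P` is validity-preserving: any play
of a Prover strategy conforming to `𝔰_P` from an `𝓛`-valid sequent (of closed
expressions) visits only `𝓛`-valid sequents. -/
theorem canonical_strategy_validity_preserving {𝒜 : Type} [Fintype 𝒜] [DecidableEq 𝒜]
    (σP : ProverStrat 𝒜) (S₀ : Sequent 𝒜)
    (hclosed : ∀ g : Expr 𝒜, g ∈ S₀.1 ∪ S₀.2 → g.Closed)
    (hcanon : ∀ h S, HistConsP σP S₀ h → seqAfter S₀ h = some S →
      CanonicalStep S (σP h S))
    (hvalid : SeqValid S₀) :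
    ∀ h S, HistConsP σP S₀ h → seqAfter S₀ h = some S → SeqValid S := by
  intro h
  induction h using List.reverseRecOn with
  | nil =>
    intro S _ hS
    have : S₀ = S := by simpa [seqAfter] using hS
    exact this ▸ hvalid
  | append_singleton h x ih =>
    obtain ⟨st, i⟩ := x
    intro S hP hS
    have hP' := histConsP_prefix σP S₀ h (st, i) hP
    obtain ⟨S', hS'⟩ := Option.isSome_iff_exists.1 hP'.1
    have hvS' := ih S' hP' hS'
    obtain ⟨T, hT, hst⟩ := hP.2 h st i [] rfl
    rw [hS'] at hT
    have hTeq : S' = T := Option.some.inj hT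
    subst hTeq
    have hcanonS : CanonicalStep S' st := hst ▸ hcanon h S' hP' hS'
    rw [seqAfter_concat, hS'] at hS
    rw [Option.bind_some, if_pos hcanonS.1] at hS
    exact step_sound st S' hcanonS hvS' hS

end RLL
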